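/- arXiv:2310.02845 — 2 statements merged into one kernel-verified Lean document; each statement's English description precedes it below -/
import Mathlib

section
/- Let k ≥ 3, φ an FO formula with variables among {x₁,…,x_k}, and z ∈ {x₁,x₂,x₃}. Then (⋀Γ_{FO3}^(k)) → T_z^(k)(φ) is valid if and only if φ is valid; and the same holds with validity replaced by finite validity. -/
namespace CoRPaper

/-- Composition of binary relations (as sets of pairs). -/
def comp {D : Type} (R S : Set (D × D)) : Set (D × D) :=
  {p | ∃ y, (p.1, y) ∈ R ∧ (y, p.2) ∈ S}

/-- Converse of a binary relation. -/
def conv {D : Type} (R : Set (D × D)) : Set (D × D) :=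
  {p | (p.2, p.1) ∈ R}

/-- The identity relation. -/
def idRel {D : Type} : Set (D × D) := {p | p.1 = p.2}

/-- Terms of the calculus of relations (CoR). -/
inductive CoR (σ : Type) : Type
  | var (a : σ)
  | id
  | compl (t : CoR σ)
  | inter (s t : CoR σ)
  | comp (s t : CoR σ)
  | conv (t : CoR σ)

/-- Semantics of CoR terms over a valuation of variables as binary relations. -/
def CoR.sem {σ D : Type} (val : σ → Set (D × D)) : CoR σ → Set (D × D)
  | .var a => val a
  | .id => idRel
  | .compl t => (t.sem val)ᶜ
  | .inter s t => s.sem val ∩ t.sem val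
  | .comp s t => CoRPaper.comp (s.sem val) (t.sem val)
  | .conv t => CoRPaper.conv (t.sem val)

/-- Size of a CoR term. -/
def CoR.size {σ : Type} : CoR σ → ℕ
  | .var _ => 1
  | .id => 1
  | .compl t => 1 + t.size
  | .inter s t => 1 + s.size + t.size
  | .comp s t => 1 + s.size + t.size
  | .conv t => 1 + t.size

/-- Quantifier-free formulas of CoR: Boolean combinations of equations. -/
inductive CoRFml (σ : Type) : Type
  | eq (s t : CoR σ)
  | not (φ : CoRFml σ)
  | and (φ ψ : CoRFml σ)

/-- Satisfaction of a quantifier-free CoR formula in a structure. -/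
def CoRFml.sat {σ D : Type} (val : σ → Set (D × D)) : CoRFml σ → Prop
  | .eq s t => s.sem val = t.sem val
  | .not φ => ¬ φ.sat val
  | .and φ ψ => φ.sat val ∧ ψ.sat val

/-- Size of a quantifier-free CoR formula. -/
def CoRFml.size {σ : Type} : CoRFml σ → ℕ
  | .eq s t => 1 + s.size + t.size
  | .not φ => 1 + φ.size
  | .and φ ψ => 1 + φ.size + ψ.size

/-- First-order formulas over binary predicate symbols `σ`, with equality,
    with variables among `x₁, …, x_k` (encoded as `Fin k`). -/
inductive FO (σ : Type) (k : ℕ) : Type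
  | rel (a : σ) (i j : Fin k)
  | eq (i j : Fin k)
  | not (φ : FO σ k)
  | and (φ ψ : FO σ k)
  | ex (i : Fin k) (φ : FO σ k)

/-- Satisfaction of a first-order formula under an assignment. -/
def FO.sat {σ : Type} {k : ℕ} {D : Type} (M : σ → Set (D × D)) (f : Fin k → D) :
    FO σ k → Prop
  | .rel a i j => (f i, f j) ∈ M a
  | .eq i j => f i = f j
  | .not φ => ¬ φ.sat M f
  | .and φ ψ => φ.sat M f ∧ ψ.sat M f
  | .ex i φ => ∃ v, φ.sat M (Function.update f i v)

/-- Size of a first-order formula. -/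
def FO.size {σ : Type} {k : ℕ} : FO σ k → ℕ
  | .rel _ _ _ => 3
  | .eq _ _ => 3
  | .not φ => 1 + φ.size
  | .and φ ψ => 1 + φ.size + ψ.size
  | .ex _ φ => 2 + φ.size

/-- A formula is equality-free. -/
def FO.noEq {σ : Type} {k : ℕ} : FO σ k → Prop
  | .rel _ _ _ => True
  | .eq _ _ => False
  | .not φ => φ.noEq
  | .and φ ψ => φ.noEq ∧ ψ.noEq
  | .ex _ φ => φ.noEq

/-- The signature `Σ^(k)`: the base symbols together with `U`, `π_i`, `Q_i`,
    `E_{[1,i+1]}` (`EL i`) and `E_{[i+1,k]}` (`ER i`) for `i : Fin k`. -/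
inductive SigK (σ : Type) (k : ℕ) : Type
  | base (a : σ)
  | U
  | pi (i : Fin k)
  | Q (i : Fin k)
  | EL (i : Fin k)
  | ER (i : Fin k)

/-- The `k`-tuple structure `M^(k)` of a structure `M` over `σ`:
    its universe is `Fin k → D` and the relations are as in the paper. -/
def tupleInterp {σ : Type} {k : ℕ} {D : Type} (M : σ → Set (D × D)) :
    SigK σ k → Set ((Fin k → D) × (Fin k → D))
  | .base a => {p | ∃ v w, (v, w) ∈ M a ∧
      p.1 = Function.const (Fin k) v ∧ p.2 = Function.const (Fin k) w}
  | .U => {p | ∃ v, p.1 = Function.const (Fin k) v ∧ p.2 = Function.const (Fin k) v}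
  | .pi i => {p | p.2 = Function.const (Fin k) (p.1 i)}
  | .Q i => {p | ∀ j, j ≠ i → p.1 j = p.2 j}
  | .EL i => {p | ∀ j, j ≤ i → p.1 j = p.2 j}
  | .ER i => {p | ∀ j, i ≤ j → p.1 j = p.2 j}

/-- `E_{[1,n]}` for `0 ≤ n ≤ k`, where `E_{[1,0]}` denotes `⊤`. -/
def ELx {σ : Type} {k : ℕ} {D : Type} (I : SigK σ k → Set (D × D)) (n : Fin (k + 1)) :
    Set (D × D) :=
  if h : (n : ℕ) = 0 then Set.univ
  else I (.EL ⟨(n : ℕ) - 1, by have := n.isLt; omega⟩)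

/-- `E_{[n+1,k]}` for `0 ≤ n ≤ k`, where `E_{[k+1,k]}` denotes `⊤`. -/
def ERx {σ : Type} {k : ℕ} {D : Type} (I : SigK σ k → Set (D × D)) (n : Fin (k + 1)) :
    Set (D × D) :=
  if h : (n : ℕ) = k then Set.univ
  else I (.ER ⟨(n : ℕ), by have := n.isLt; omega⟩)

/-- A structure over `Σ^(k)` satisfies all the equations of `Γ^(k)`
    (equations (1)–(11) of the paper). -/
def satGamma {σ : Type} {k : ℕ} {D : Type} (I : SigK σ k → Set (D × D)) : Prop :=
  (I .U = ⋂ j, I (.pi j)) ∧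
  (∀ i : Fin k, I (.EL i) = ELx I i.castSucc ∩ comp (I (.pi i)) (conv (I (.pi i)))) ∧
  (∀ i : Fin k, I (.ER i) = ERx I i.succ ∩ comp (I (.pi i)) (conv (I (.pi i)))) ∧
  (∀ i : Fin k, I (.Q i) = ELx I i.castSucc ∩ ERx I i.succ) ∧
  (I .U ⊆ idRel) ∧
  (∀ i : Fin k, comp (conv (I (.pi i))) (I (.pi i)) ⊆ idRel) ∧
  (∀ i : Fin k, idRel ⊆ comp (I (.pi i)) (comp (I .U) (conv (I (.pi i))))) ∧
  (∀ i : Fin k, comp Set.univ (I .U) ⊆ comp (I (.Q i)) (I (.pi i))) ∧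
  (idRel = ELx I (Fin.last k)) ∧
  (comp Set.univ (comp (I .U) Set.univ) = Set.univ) ∧
  (∀ a : σ, I (.base a) ⊆ comp (I .U) (comp Set.univ (I .U)))

/-- A structure over `Σ^(k)` satisfies all the FO3 sentences of `Γ_{FO3}^(k)`
    (sentences (1')–(11') of the paper). -/
def satGammaFO3 {σ : Type} {k : ℕ} {D : Type} (I : SigK σ k → Set (D × D)) : Prop :=
  (∀ x y : D, (x, y) ∈ I .U ↔ ∀ j : Fin k, (x, y) ∈ I (.pi j)) ∧
  (∀ i : Fin k, ∀ x y : D, (x, y) ∈ I (.EL i) ↔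
    ((x, y) ∈ ELx I i.castSucc ∧ ∃ z, (x, z) ∈ I (.pi i) ∧ (y, z) ∈ I (.pi i))) ∧
  (∀ i : Fin k, ∀ x y : D, (x, y) ∈ I (.ER i) ↔
    ((x, y) ∈ ERx I i.succ ∧ ∃ z, (x, z) ∈ I (.pi i) ∧ (y, z) ∈ I (.pi i))) ∧
  (∀ i : Fin k, ∀ x y : D, (x, y) ∈ I (.Q i) ↔
    ((x, y) ∈ ELx I i.castSucc ∧ (x, y) ∈ ERx I i.succ)) ∧
  (∀ x y : D, (x, y) ∈ I .U → x = y) ∧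
  (∀ i : Fin k, ∀ x y z : D, (x, y) ∈ I (.pi i) → (x, z) ∈ I (.pi i) → y = z) ∧
  (∀ i : Fin k, ∀ x : D, ∃ y, (x, y) ∈ I (.pi i) ∧ (y, y) ∈ I .U) ∧
  (∀ i : Fin k, ∀ x y : D, (y, y) ∈ I .U → ∃ z, (x, z) ∈ I (.Q i) ∧ (z, y) ∈ I (.pi i)) ∧
  (∀ x y : D, x = y ↔ (x, y) ∈ ELx I (Fin.last k)) ∧
  (∃ x : D, (x, x) ∈ I .U) ∧
  (∀ a : σ, ∀ x y : D, (x, y) ∈ I (.base a) → ((x, x) ∈ I .U ∧ (y, y) ∈ I .U))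

/-- The translation `T^(k)` from FO formulas into CoR terms over `Σ^(k)`. -/
def Ttrans {σ : Type} {k : ℕ} : FO σ k → CoR (SigK σ k)
  | .rel a i j =>
      .inter (.comp (.var (.pi i)) (.comp (.var (.base a)) (.conv (.var (.pi j))))) .id
  | .eq i j => .inter (.comp (.var (.pi i)) (.conv (.var (.pi j)))) .id
  | .not φ => .compl (Ttrans φ)
  | .and φ ψ => .inter (Ttrans φ) (Ttrans ψ)
  | .ex i φ => .inter (.comp (.var (.Q i)) (.comp (Ttrans φ) (.conv (.var (.Q i))))) .id

/-- `z' = min({x₁,x₂,x₃} \ {z})` under the ordering `x₁ < x₂ < x₃`. -/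
def fstOther : Fin 3 → Fin 3
  | 0 => 1
  | 1 => 0
  | 2 => 0

/-- `z'' = min({x₁,x₂,x₃} \ {z, z'})`. -/
def sndOther : Fin 3 → Fin 3
  | 0 => 2
  | 1 => 2
  | 2 => 1

/-- The direct three-variable translation `T_z^(k)` of FO formulas. -/
def Tz {σ : Type} {k : ℕ} : Fin 3 → FO σ k → FO (SigK σ k) 3
  | z, .rel a i j =>
      .ex (fstOther z) (.ex (sndOther z)
        (.and (.rel (.pi i) z (fstOther z))
          (.and (.rel (.base a) (fstOther z) (sndOther z))
            (.rel (.pi j) z (sndOther z)))))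
  | z, .eq i j =>
      .ex (fstOther z) (.and (.rel (.pi i) z (fstOther z)) (.rel (.pi j) z (fstOther z)))
  | z, .not φ => .not (Tz z φ)
  | z, .and φ ψ => .and (Tz z φ) (Tz z ψ)
  | z, .ex i φ => .ex (fstOther z) (.and (.rel (.Q i) z (fstOther z)) (Tz (fstOther z) φ))

/-- Satisfaction of the Tseitin equation set `Γ_t`: the valuation interprets
    both the original variables (`Sum.inl`) and the fresh variables `a_s`
    (`Sum.inr s`) and satisfies all defining equations for subterms of `t`. -/
def tseitinSat {σ D : Type} (val : σ ⊕ CoR σ → Set (D × D)) : CoR σ → Prop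
  | .var b => val (Sum.inr (.var b)) = val (Sum.inl b)
  | .id => val (Sum.inr .id) = idRel
  | .compl s => tseitinSat val s ∧ val (Sum.inr (.compl s)) = (val (Sum.inr s))ᶜ
  | .inter s u => tseitinSat val s ∧ tseitinSat val u ∧
      val (Sum.inr (.inter s u)) = val (Sum.inr s) ∩ val (Sum.inr u)
  | .comp s u => tseitinSat val s ∧ tseitinSat val u ∧
      val (Sum.inr (.comp s u)) = comp (val (Sum.inr s)) (val (Sum.inr u))
  | .conv s => tseitinSat val s ∧ val (Sum.inr (.conv s)) = conv (val (Sum.inr s))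

/-- The subterm relation on CoR terms. -/
inductive Subterm {σ : Type} : CoR σ → CoR σ → Prop
  | refl (t : CoR σ) : Subterm t t
  | compl {s t : CoR σ} : Subterm s t → Subterm s (.compl t)
  | conv {s t : CoR σ} : Subterm s t → Subterm s (.conv t)
  | interL {s t u : CoR σ} : Subterm s t → Subterm s (.inter t u)
  | interR {s t u : CoR σ} : Subterm s u → Subterm s (.inter t u)
  | compL {s t u : CoR σ} : Subterm s t → Subterm s (.comp t u)
  | compR {s t u : CoR σ} : Subterm s u → Subterm s (.comp t u)


/-! ### Auxiliary machinery for the proof of `Tz_validity` -/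

section TzAux

variable {σ : Type} {k : ℕ} {D : Type}

private lemma fstOther_ne : ∀ z : Fin 3, fstOther z ≠ z := by decide
private lemma sndOther_ne : ∀ z : Fin 3, sndOther z ≠ z := by decide
private lemma sndOther_ne_fst : ∀ z : Fin 3, sndOther z ≠ fstOther z := by decide

/-- The set of "diagonal" elements of a `Γ`-model. -/
def U0 (I : SigK σ k → Set (D × D)) : Type := {y : D // (y, y) ∈ I .U}

/-- The base structure extracted from a `Γ`-model. -/
def M0 (I : SigK σ k → Set (D × D)) : σ → Set (U0 I × U0 I) :=
  fun a => {q | (q.1.1, q.2.1) ∈ I (.base a)}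

/-- The `i`-th projection function of a `Γ`-model. -/
noncomputable def pf (I : SigK σ k → Set (D × D)) (hI : satGammaFO3 I)
    (x : D) (i : Fin k) : U0 I :=
  ⟨(hI.2.2.2.2.2.2.1 i x).choose, (hI.2.2.2.2.2.2.1 i x).choose_spec.2⟩

lemma pf_pi (I : SigK σ k → Set (D × D)) (hI : satGammaFO3 I) (x : D) (i : Fin k) :
    (x, (pf I hI x i).1) ∈ I (.pi i) := (hI.2.2.2.2.2.2.1 i x).choose_spec.1

lemma pf_eq (I : SigK σ k → Set (D × D)) (hI : satGammaFO3 I) {x y : D} {i : Fin k}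
    (h : (x, y) ∈ I (.pi i)) : y = (pf I hI x i).1 :=
  hI.2.2.2.2.2.1 i x y _ h (pf_pi I hI x i)

lemma pi_pair (I : SigK σ k → Set (D × D)) (hI : satGammaFO3 I) (i : Fin k) (x y : D) :
    (∃ u, (x, u) ∈ I (.pi i) ∧ (y, u) ∈ I (.pi i)) ↔
      (pf I hI x i).1 = (pf I hI y i).1 := by
  constructor
  · rintro ⟨u, h1, h2⟩
    rw [← pf_eq I hI h1, ← pf_eq I hI h2]
  · intro h
    exact ⟨(pf I hI x i).1, pf_pi I hI x i, by rw [h]; exact pf_pi I hI y i⟩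

lemma ELx_castSucc (I : SigK σ k → Set (D × D)) (i : Fin k) :
    ELx I i.castSucc =
      if _ : i.val = 0 then Set.univ
      else I (.EL ⟨i.val - 1, by have := i.isLt; omega⟩) := by
  simp only [ELx, Fin.coe_castSucc]

lemma ERx_succ (I : SigK σ k → Set (D × D)) (i : Fin k) :
    ERx I i.succ =
      if _ : i.val + 1 = k then Set.univ
      else I (.ER ⟨i.val + 1, by have := i.isLt; omega⟩) := by
  simp only [ERx, Fin.val_succ]

lemma ELx_last (I : SigK σ k → Set (D × D)) (hk : 0 < k) :
    ELx I (Fin.last k) = I (.EL ⟨k - 1, by omega⟩) := by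
  simp only [ELx, Fin.val_last]
  rw [dif_neg (by omega)]

lemma EL_char (I : SigK σ k → Set (D × D)) (hI : satGammaFO3 I) (i : Fin k) (x y : D) :
    (x, y) ∈ I (.EL i) ↔ ∀ j ≤ i, (pf I hI x j).1 = (pf I hI y j).1 := by
  have key : ∀ (n : ℕ) (i : Fin k), i.val ≤ n → ∀ x y : D,
      ((x, y) ∈ I (.EL i) ↔ ∀ j ≤ i, (pf I hI x j).1 = (pf I hI y j).1) := by
    intro n
    induction n with
    | zero =>
      intro i hi x y
      have h0 : i.val = 0 := Nat.le_zero.mp hi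
      rw [hI.2.1 i x y, pi_pair I hI, ELx_castSucc, dif_pos h0]
      simp only [Set.mem_univ, true_and]
      constructor
      · intro h j hj
        have : j = i := by
          apply Fin.ext
          rw [Fin.le_def] at hj
          omega
        rw [this]; exact h
      · intro h
        exact h i le_rfl
    | succ n ih =>
      intro i hi x y
      by_cases h0 : i.val = 0
      · rw [hI.2.1 i x y, pi_pair I hI, ELx_castSucc, dif_pos h0]
        simp only [Set.mem_univ, true_and]
        constructor
        · intro h j hj
          have : j = i := by
            apply Fin.ext
            rw [Fin.le_def] at hj
            omega
          rw [this]; exact h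
        · intro h
          exact h i le_rfl
      · rw [hI.2.1 i x y, pi_pair I hI, ELx_castSucc, dif_neg h0]
        have hlt : i.val - 1 < k := by have := i.isLt; omega
        rw [ih ⟨i.val - 1, hlt⟩ (by simp; omega) x y]
        constructor
        · rintro ⟨h1, h2⟩ j hj
          by_cases hji : j = i
          · rw [hji]; exact h2
          · apply h1
            rw [Fin.le_def] at hj ⊢
            have : j.val ≠ i.val := fun h => hji (Fin.ext h)
            simp only
            omega
        · intro h
          refine ⟨fun j hj => h j ?_, h i le_rfl⟩
          rw [Fin.le_def] at hj ⊢
          simp only at hj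
          omega
  exact key i.val i le_rfl x y

lemma ER_char (I : SigK σ k → Set (D × D)) (hI : satGammaFO3 I) (i : Fin k) (x y : D) :
    (x, y) ∈ I (.ER i) ↔ ∀ j, i ≤ j → (pf I hI x j).1 = (pf I hI y j).1 := by
  have key : ∀ (n : ℕ) (i : Fin k), k - i.val ≤ n → ∀ x y : D,
      ((x, y) ∈ I (.ER i) ↔ ∀ j, i ≤ j → (pf I hI x j).1 = (pf I hI y j).1) := by
    intro n
    induction n with
    | zero =>
      intro i hi
      exact absurd hi (by have := i.isLt; omega)
    | succ n ih =>
      intro i hi x y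
      by_cases h0 : i.val + 1 = k
      · rw [hI.2.2.1 i x y, pi_pair I hI, ERx_succ, dif_pos h0]
        simp only [Set.mem_univ, true_and]
        constructor
        · intro h j hj
          have : j = i := by
            apply Fin.ext
            rw [Fin.le_def] at hj
            have := j.isLt
            omega
          rw [this]; exact h
        · intro h
          exact h i le_rfl
      · rw [hI.2.2.1 i x y, pi_pair I hI, ERx_succ, dif_neg h0]
        have hlt : i.val + 1 < k := by have := i.isLt; omega
        rw [ih ⟨i.val + 1, hlt⟩ (by simp; omega) x y]
        constructor
        · rintro ⟨h1, h2⟩ j hj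
          by_cases hji : j = i
          · rw [hji]; exact h2
          · apply h1
            rw [Fin.le_def] at hj ⊢
            have : j.val ≠ i.val := fun h => hji (Fin.ext h)
            simp only
            omega
        · intro h
          refine ⟨fun j hj => h j ?_, h i le_rfl⟩
          rw [Fin.le_def] at hj ⊢
          simp only at hj
          omega
  exact key (k - i.val) i le_rfl x y

lemma Q_char (I : SigK σ k → Set (D × D)) (hI : satGammaFO3 I) (i : Fin k) (x y : D) :
    (x, y) ∈ I (.Q i) ↔ ∀ j, j ≠ i → (pf I hI x j).1 = (pf I hI y j).1 := by
  rw [hI.2.2.2.1 i x y]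
  have hA : (x, y) ∈ ELx I i.castSucc ↔
      ∀ j : Fin k, j.val < i.val → (pf I hI x j).1 = (pf I hI y j).1 := by
    rw [ELx_castSucc]
    by_cases h0 : i.val = 0
    · rw [dif_pos h0]
      simp only [Set.mem_univ, true_iff]
      intro j hj
      omega
    · rw [dif_neg h0]
      rw [EL_char I hI]
      constructor
      · intro h j hj
        exact h j (by rw [Fin.le_def]; simp only; omega)
      · intro h j hj
        rw [Fin.le_def] at hj
        simp only at hj
        exact h j (by omega)
  have hB : (x, y) ∈ ERx I i.succ ↔
      ∀ j : Fin k, i.val < j.val → (pf I hI x j).1 = (pf I hI y j).1 := by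
    rw [ERx_succ]
    by_cases h0 : i.val + 1 = k
    · rw [dif_pos h0]
      simp only [Set.mem_univ, true_iff]
      intro j hj
      have := j.isLt
      omega
    · rw [dif_neg h0]
      rw [ER_char I hI]
      constructor
      · intro h j hj
        exact h j (by rw [Fin.le_def]; simp only; omega)
      · intro h j hj
        rw [Fin.le_def] at hj
        simp only at hj
        exact h j (by omega)
  rw [hA, hB]
  constructor
  · rintro ⟨h1, h2⟩ j hj
    have : j.val ≠ i.val := fun h => hj (Fin.ext h)
    rcases Nat.lt_or_ge j.val i.val with h | h
    · exact h1 j h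
    · exact h2 j (by omega)
  · intro h
    constructor
    · intro j hj
      exact h j (fun e => by rw [e] at hj; omega)
    · intro j hj
      exact h j (fun e => by rw [e] at hj; omega)

end TzAux

section TzAux2

variable {σ : Type} {k : ℕ} {D : Type}

/-- Key semantic correspondence: in a model of `Γ_{FO3}^(k)`, the translation
`T_z^(k)(φ)` holds at `g` iff `φ` holds in the extracted base structure at the
tuple of projections of `g z`. -/
lemma Tz_sat_iff (I : SigK σ k → Set (D × D)) (hI : satGammaFO3 I) (φ : FO σ k) :
    ∀ (z : Fin 3) (g : Fin 3 → D),
      FO.sat I g (Tz z φ) ↔ FO.sat (M0 I) (pf I hI (g z)) φ := by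
  induction φ with
  | rel a i j =>
    intro z g
    have hz1 : z ≠ fstOther z := (fstOther_ne z).symm
    have hz2 : z ≠ sndOther z := (sndOther_ne z).symm
    have hz12 : fstOther z ≠ sndOther z := (sndOther_ne_fst z).symm
    simp only [Tz, FO.sat]
    constructor
    · rintro ⟨u, v, h1, h2, h3⟩
      simp only [Function.update_self, Function.update_of_ne hz1,
        Function.update_of_ne hz2, Function.update_of_ne hz12] at h1 h2 h3
      show ((pf I hI (g z) i).1, (pf I hI (g z) j).1) ∈ I (.base a)
      rw [← pf_eq I hI h1, ← pf_eq I hI h3]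
      exact h2
    · intro h
      refine ⟨(pf I hI (g z) i).1, (pf I hI (g z) j).1, ?_, ?_, ?_⟩ <;>
        simp only [Function.update_self, Function.update_of_ne hz1,
          Function.update_of_ne hz2, Function.update_of_ne hz12]
      · exact pf_pi I hI (g z) i
      · exact h
      · exact pf_pi I hI (g z) j
  | eq i j =>
    intro z g
    have hz1 : z ≠ fstOther z := (fstOther_ne z).symm
    simp only [Tz, FO.sat]
    constructor
    · rintro ⟨u, h1, h2⟩
      simp only [Function.update_self, Function.update_of_ne hz1] at h1 h2
      exact Subtype.ext ((pf_eq I hI h1).symm.trans (pf_eq I hI h2))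
    · intro h
      refine ⟨(pf I hI (g z) i).1, ?_, ?_⟩ <;>
        simp only [Function.update_self, Function.update_of_ne hz1]
      · exact pf_pi I hI (g z) i
      · rw [show (pf I hI (g z) i).1 = (pf I hI (g z) j).1 from congrArg _ h]
        exact pf_pi I hI (g z) j
  | not φ ih =>
    intro z g
    simp only [Tz, FO.sat]
    exact not_congr (ih z g)
  | and φ ψ ih1 ih2 =>
    intro z g
    simp only [Tz, FO.sat]
    exact and_congr (ih1 z g) (ih2 z g)
  | ex i φ ih =>
    intro z g
    have hz1 : z ≠ fstOther z := (fstOther_ne z).symm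
    simp only [Tz, FO.sat]
    constructor
    · rintro ⟨w, hQ, hsat⟩
      simp only [Function.update_self, Function.update_of_ne hz1] at hQ
      have h2 := (ih (fstOther z) (Function.update g (fstOther z) w)).1 hsat
      rw [Function.update_self] at h2
      refine ⟨pf I hI w i, ?_⟩
      have hfun : Function.update (pf I hI (g z)) i (pf I hI w i) = pf I hI w := by
        funext j
        by_cases hji : j = i
        · rw [hji, Function.update_self]
        · rw [Function.update_of_ne hji]
          exact Subtype.ext ((Q_char I hI i (g z) w).1 hQ j hji)
      rw [hfun]
      exact h2
    · rintro ⟨v, hv⟩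
      obtain ⟨w, hQ, hπ⟩ := hI.2.2.2.2.2.2.2.1 i (g z) v.1 v.2
      refine ⟨w, ?_, ?_⟩
      · simp only [Function.update_self, Function.update_of_ne hz1]
        exact hQ
      · rw [ih (fstOther z) (Function.update g (fstOther z) w), Function.update_self]
        have hfun : Function.update (pf I hI (g z)) i v = pf I hI w := by
          funext j
          by_cases hji : j = i
          · rw [hji, Function.update_self]
            exact Subtype.ext (pf_eq I hI hπ)
          · rw [Function.update_of_ne hji]
            exact Subtype.ext ((Q_char I hI i (g z) w).1 hQ j hji)
        rw [← hfun]
        exact hv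

/-- First-order satisfaction is invariant under isomorphism. -/
lemma sat_map {E : Type} (e : D ≃ E) (M : σ → Set (D × D)) (N : σ → Set (E × E))
    (hMN : ∀ a (p q : D), (p, q) ∈ M a ↔ (e p, e q) ∈ N a) (φ : FO σ k) :
    ∀ f : Fin k → D, FO.sat M f φ ↔ FO.sat N (fun j => e (f j)) φ := by
  induction φ with
  | rel a i j => intro f; exact hMN a (f i) (f j)
  | eq i j =>
    intro f
    simp only [FO.sat]
    exact ⟨fun h => by rw [h], fun h => e.injective h⟩
  | not φ ih => intro f; exact not_congr (ih f)
  | and φ ψ ih1 ih2 => intro f; exact and_congr (ih1 f) (ih2 f)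
  | ex i φ ih =>
    intro f
    simp only [FO.sat]
    constructor
    · rintro ⟨v, hv⟩
      refine ⟨e v, ?_⟩
      have h2 := (ih (Function.update f i v)).1 hv
      have heq : (fun j => e (Function.update f i v j)) =
          Function.update (fun j => e (f j)) i (e v) := by
        funext j
        by_cases h : j = i
        · subst h; rw [Function.update_self, Function.update_self]
        · rw [Function.update_of_ne h, Function.update_of_ne h]
      rwa [heq] at h2
    · rintro ⟨w, hw⟩
      refine ⟨e.symm w, ?_⟩
      rw [ih (Function.update f i (e.symm w))]
      have heq : (fun j => e (Function.update f i (e.symm w) j)) =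
          Function.update (fun j => e (f j)) i w := by
        funext j
        by_cases h : j = i
        · subst h; rw [Function.update_self, Function.update_self, Equiv.apply_symm_apply]
        · rw [Function.update_of_ne h, Function.update_of_ne h]
      rw [heq]
      exact hw

end TzAux2

section TzAux3

variable {σ : Type} {k : ℕ} {D : Type}

/-- The `k`-tuple structure of any structure satisfies `Γ_{FO3}^(k)`. -/
lemma tuple_satGamma (hk : 0 < k) (hD : Nonempty D) (M : σ → Set (D × D)) :
    satGammaFO3 (tupleInterp (k := k) M) := by
  set j0 : Fin k := ⟨0, hk⟩ with hj0
  have cinj : ∀ v w : D, Function.const (Fin k) v = Function.const (Fin k) w → v = w :=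
    fun v w h => congrFun h j0
  refine ⟨?_, ?_, ?_, ?_, ?_, ?_, ?_, ?_, ?_, ?_, ?_⟩
  -- (1') U = ⋂ π_j
  · intro x y
    simp only [tupleInterp, Set.mem_setOf_eq]
    constructor
    · rintro ⟨v, h1, h2⟩ j
      rw [h1, h2]
      rfl
    · intro h
      have hx : ∀ j, x j = x j0 := fun j => cinj _ _ ((h j).symm.trans (h j0))
      exact ⟨x j0, funext fun j => hx j, h j0⟩
  -- (2') E_{[1,i]}
  · intro i x y
    have hpi : (∃ t, (x, t) ∈ tupleInterp (k := k) M (.pi i) ∧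
        (y, t) ∈ tupleInterp (k := k) M (.pi i)) ↔ x i = y i := by
      simp only [tupleInterp, Set.mem_setOf_eq]
      constructor
      · rintro ⟨t, h1, h2⟩
        exact cinj _ _ (h1 ▸ h2)
      · intro h
        exact ⟨Function.const (Fin k) (x i), rfl, by rw [h]⟩
    rw [hpi, ELx_castSucc]
    by_cases h0 : i.val = 0
    · rw [dif_pos h0]
      simp only [tupleInterp, Set.mem_setOf_eq, Set.mem_univ, true_and]
      constructor
      · intro h
        exact h i le_rfl
      · intro h j hj
        have : j = i := by
          apply Fin.ext
          rw [Fin.le_def] at hj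
          omega
        rw [this]; exact h
    · rw [dif_neg h0]
      simp only [tupleInterp, Set.mem_setOf_eq]
      constructor
      · intro h
        refine ⟨fun j hj => h j ?_, h i le_rfl⟩
        rw [Fin.le_def] at hj ⊢
        simp only at hj
        omega
      · rintro ⟨h1, h2⟩ j hj
        by_cases hji : j = i
        · rw [hji]; exact h2
        · apply h1
          rw [Fin.le_def] at hj ⊢
          have : j.val ≠ i.val := fun h => hji (Fin.ext h)
          simp only
          omega
  -- (3') E_{[i,k]}
  · intro i x y
    have hpi : (∃ t, (x, t) ∈ tupleInterp (k := k) M (.pi i) ∧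
        (y, t) ∈ tupleInterp (k := k) M (.pi i)) ↔ x i = y i := by
      simp only [tupleInterp, Set.mem_setOf_eq]
      constructor
      · rintro ⟨t, h1, h2⟩
        exact cinj _ _ (h1 ▸ h2)
      · intro h
        exact ⟨Function.const (Fin k) (x i), rfl, by rw [h]⟩
    rw [hpi, ERx_succ]
    by_cases h0 : i.val + 1 = k
    · rw [dif_pos h0]
      simp only [tupleInterp, Set.mem_setOf_eq, Set.mem_univ, true_and]
      constructor
      · intro h
        exact h i le_rfl
      · intro h j hj
        have : j = i := by
          apply Fin.ext
          rw [Fin.le_def] at hj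
          have := j.isLt
          omega
        rw [this]; exact h
    · rw [dif_neg h0]
      simp only [tupleInterp, Set.mem_setOf_eq]
      constructor
      · intro h
        refine ⟨fun j hj => h j ?_, h i le_rfl⟩
        rw [Fin.le_def] at hj ⊢
        simp only at hj
        omega
      · rintro ⟨h1, h2⟩ j hj
        by_cases hji : j = i
        · rw [hji]; exact h2
        · apply h1
          rw [Fin.le_def] at hj ⊢
          have : j.val ≠ i.val := fun h => hji (Fin.ext h)
          simp only
          omega
  -- (4') Q_i
  · intro i x y
    have hA : (x, y) ∈ ELx (tupleInterp (k := k) M) i.castSucc ↔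
        ∀ j : Fin k, j.val < i.val → x j = y j := by
      rw [ELx_castSucc]
      by_cases h0 : i.val = 0
      · rw [dif_pos h0]
        simp only [Set.mem_univ, true_iff]
        intro j hj
        omega
      · rw [dif_neg h0]
        simp only [tupleInterp, Set.mem_setOf_eq]
        constructor
        · intro h j hj
          exact h j (by rw [Fin.le_def]; simp only; omega)
        · intro h j hj
          rw [Fin.le_def] at hj
          simp only at hj
          exact h j (by omega)
    have hB : (x, y) ∈ ERx (tupleInterp (k := k) M) i.succ ↔
        ∀ j : Fin k, i.val < j.val → x j = y j := by
      rw [ERx_succ]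
      by_cases h0 : i.val + 1 = k
      · rw [dif_pos h0]
        simp only [Set.mem_univ, true_iff]
        intro j hj
        have := j.isLt
        omega
      · rw [dif_neg h0]
        simp only [tupleInterp, Set.mem_setOf_eq]
        constructor
        · intro h j hj
          exact h j (by rw [Fin.le_def]; simp only; omega)
        · intro h j hj
          rw [Fin.le_def] at hj
          simp only at hj
          exact h j (by omega)
    rw [hA, hB]
    show (∀ j, j ≠ i → x j = y j) ↔ _
    constructor
    · intro h
      constructor
      · intro j hj
        exact h j (fun e => by rw [e] at hj; omega)
      · intro j hj
        exact h j (fun e => by rw [e] at hj; omega)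
    · rintro ⟨h1, h2⟩ j hj
      have : j.val ≠ i.val := fun h => hj (Fin.ext h)
      rcases Nat.lt_or_ge j.val i.val with h | h
      · exact h1 j h
      · exact h2 j (by omega)
  -- (5') U ⊆ id
  · rintro x y ⟨v, h1, h2⟩
    exact h1.trans h2.symm
  -- (6') π_i functional
  · intro i x y z h1 h2
    exact h1.trans h2.symm
  -- (7') π_i total into U₀
  · intro i x
    exact ⟨Function.const (Fin k) (x i), rfl, ⟨x i, rfl, rfl⟩⟩
  -- (8') existence
  · rintro i x y ⟨v, hv1, _⟩
    refine ⟨Function.update x i v, ?_, ?_⟩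
    · intro j hj
      exact (Function.update_of_ne hj v x).symm
    · show y = Function.const (Fin k) (Function.update x i v i)
      rw [Function.update_self]
      exact hv1
  -- (9') extensionality
  · intro x y
    rw [ELx_last _ hk]
    simp only [tupleInterp, Set.mem_setOf_eq]
    constructor
    · intro h j _
      rw [h]
    · intro h
      funext j
      exact h j (by rw [Fin.le_def]; simp only; have := j.isLt; omega)
  -- (10') nonemptiness
  · obtain ⟨v⟩ := hD
    exact ⟨Function.const (Fin k) v, v, rfl, rfl⟩
  -- (11') base relations on U₀
  · rintro a x y ⟨v, w, _, h1, h2⟩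
    exact ⟨⟨v, h1, h1⟩, ⟨w, h2, h2⟩⟩

end TzAux3

section TzAux4

variable {σ : Type} {k : ℕ} {D : Type}

/-- Transfer satisfaction in the extracted base structure of the `k`-tuple
structure back to the original structure. -/
lemma main_dir1 (hk : 0 < k) (M : σ → Set (D × D))
    (hI : satGammaFO3 (tupleInterp (k := k) M)) (φ : FO σ k) (f : Fin k → D)
    (h1 : FO.sat (M0 (tupleInterp (k := k) M)) (pf _ hI f) φ) :
    FO.sat M f φ := by
  let e : U0 (tupleInterp (k := k) M) ≃ D :=
    { toFun := fun t => t.1 ⟨0, hk⟩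
      invFun := fun v => ⟨Function.const (Fin k) v, ⟨v, rfl, rfl⟩⟩
      left_inv := by
        rintro ⟨t, ht⟩
        apply Subtype.ext
        obtain ⟨v, hv1, -⟩ := ht
        have hv1' : t = Function.const (Fin k) v := hv1
        show Function.const (Fin k) (t ⟨0, hk⟩) = t
        rw [hv1']
        rfl
      right_inv := fun v => rfl }
  have hMN : ∀ a (p q : U0 (tupleInterp (k := k) M)),
      (p, q) ∈ M0 (tupleInterp (k := k) M) a ↔ (e p, e q) ∈ M a := by
    intro a p q
    constructor
    · rintro ⟨v, w, hm, hp1, hq1⟩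
      show (p.1 ⟨0, hk⟩, q.1 ⟨0, hk⟩) ∈ M a
      have hp1' : p.1 ⟨0, hk⟩ = v := congrFun hp1 _
      have hq1' : q.1 ⟨0, hk⟩ = w := congrFun hq1 _
      rw [hp1', hq1']
      exact hm
    · intro h
      have hp := p.2
      have hq := q.2
      obtain ⟨vp, hvp, -⟩ := hp
      obtain ⟨vq, hvq, -⟩ := hq
      have hvp' : p.1 = Function.const (Fin k) vp := hvp
      have hvq' : q.1 = Function.const (Fin k) vq := hvq
      refine ⟨p.1 ⟨0, hk⟩, q.1 ⟨0, hk⟩, h, ?_, ?_⟩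
      · exact hvp'.trans (congrArg _ (congrFun hvp' ⟨0, hk⟩).symm)
      · exact hvq'.trans (congrArg _ (congrFun hvq' ⟨0, hk⟩).symm)
  have h2 := (sat_map e (M0 (tupleInterp (k := k) M)) M hMN φ (pf _ hI f)).1 h1
  have hf : (fun j => e (pf (tupleInterp (k := k) M) hI f j)) = f := by
    funext j
    have hp' : (pf (tupleInterp (k := k) M) hI f j).1 =
        Function.const (Fin k) (f j) := pf_pi (tupleInterp (k := k) M) hI f j
    show (pf (tupleInterp (k := k) M) hI f j).1 ⟨0, hk⟩ = f j
    rw [hp']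
    rfl
  rwa [hf] at h2

end TzAux4

/-- `(⋀Γ_{FO3}^(k)) → T_z^(k)(φ)` is valid iff `φ` is valid,
and likewise for finite validity. -/
theorem Tz_validity {σ : Type} {k : ℕ} (hk : 3 ≤ k) (φ : FO σ k) (z : Fin 3) :
    ((∀ (D : Type) (_ : Nonempty D) (I : SigK σ k → Set (D × D)),
        satGammaFO3 I → ∀ g : Fin 3 → D, FO.sat I g (Tz z φ)) ↔
      (∀ (D : Type) (_ : Nonempty D) (M : σ → Set (D × D)) (f : Fin k → D),
        FO.sat M f φ)) ∧
    ((∀ (D : Type) (_ : Nonempty D) (_ : Finite D) (I : SigK σ k → Set (D × D)),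
        satGammaFO3 I → ∀ g : Fin 3 → D, FO.sat I g (Tz z φ)) ↔
      (∀ (D : Type) (_ : Nonempty D) (_ : Finite D) (M : σ → Set (D × D))
        (f : Fin k → D), FO.sat M f φ)) := by
  have hk0 : 0 < k := by omega
  constructor
  · constructor
    · intro h D hD M f
      haveI := hD
      have hI := tuple_satGamma hk0 hD M
      exact main_dir1 hk0 M hI φ f
        ((Tz_sat_iff _ hI φ z (fun _ => f)).1
          (h (Fin k → D) inferInstance (tupleInterp M) hI (fun _ => f)))
    · intro h D hD I hI g
      rw [Tz_sat_iff I hI φ z g]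
      obtain ⟨x0, hx0⟩ := hI.2.2.2.2.2.2.2.2.2.1
      exact h (U0 I) ⟨⟨x0, hx0⟩⟩ (M0 I) (pf I hI (g z))
  · constructor
    · intro h D hD hfin M f
      haveI := hD
      haveI := hfin
      have hI := tuple_satGamma hk0 hD M
      exact main_dir1 hk0 M hI φ f
        ((Tz_sat_iff _ hI φ z (fun _ => f)).1
          (h (Fin k → D) inferInstance inferInstance (tupleInterp M) hI (fun _ => f)))
    · intro h D hD hfin I hI g
      haveI := hfin
      rw [Tz_sat_iff I hI φ z g]
      obtain ⟨x0, hx0⟩ := hI.2.2.2.2.2.2.2.2.2.1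
      exact h (U0 I) ⟨⟨x0, hx0⟩⟩ Subtype.finite (M0 I) (pf I hI (g z))

end CoRPaper
end

section
/- A structure M over Σ^(k) satisfies the conjunction of the FO3 sentences in Γ_{FO3}^(k) if and only if M satisfies the conjunction of the CoR equations in Γ^(k); consequently, M ⊨ ⋀Γ_{FO3}^(k) iff M is isomorphic to a k-tuple structure. -/
namespace CoRPaper

section Aux

variable {σ : Type} {k : ℕ} {D : Type}

lemma mem_comp {R S : Set (D × D)} {x y : D} :
    (x, y) ∈ comp R S ↔ ∃ z, (x, z) ∈ R ∧ (z, y) ∈ S := Iff.rfl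

lemma mem_conv {R : Set (D × D)} {x y : D} : (x, y) ∈ conv R ↔ (y, x) ∈ R := Iff.rfl

lemma mem_idRel {x y : D} : (x, y) ∈ (idRel : Set (D × D)) ↔ x = y := Iff.rfl

lemma rel_ext {R S : Set (D × D)} : R = S ↔ ∀ x y : D, (x, y) ∈ R ↔ (x, y) ∈ S := by
  constructor
  · rintro rfl x y; exact Iff.rfl
  · intro h; ext ⟨x, y⟩; exact h x y

lemma rel_sub {R S : Set (D × D)} : R ⊆ S ↔ ∀ x y : D, (x, y) ∈ R → (x, y) ∈ S := by
  constructor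
  · intro h x y hxy; exact h hxy
  · intro h ⟨x, y⟩ hxy; exact h x y hxy

/-- Part 1: the FO3 axioms are equivalent to the CoR equations. -/
lemma satGammaFO3_iff_satGamma [Nonempty D] (I : SigK σ k → Set (D × D)) :
    satGammaFO3 I ↔ satGamma I := by
  constructor
  · rintro ⟨g1, g2, g3, g4, g5, g6, g7, g8, g9, g10, g11⟩
    refine ⟨?_, ?_, ?_, ?_, ?_, ?_, ?_, ?_, ?_, ?_, ?_⟩
    · exact rel_ext.2 fun x y => by simpa [Set.mem_iInter] using g1 x y
    · intro i
      refine rel_ext.2 fun x y => ?_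
      rw [Set.mem_inter_iff]
      exact (g2 i x y).trans (by simp [mem_comp, mem_conv])
    · intro i
      refine rel_ext.2 fun x y => ?_
      rw [Set.mem_inter_iff]
      exact (g3 i x y).trans (by simp [mem_comp, mem_conv])
    · intro i
      refine rel_ext.2 fun x y => ?_
      rw [Set.mem_inter_iff]
      exact g4 i x y
    · exact rel_sub.2 fun x y hxy => g5 x y hxy
    · intro i
      refine rel_sub.2 fun x y hxy => ?_
      obtain ⟨z, hzx, hzy⟩ := hxy
      exact g6 i z x y hzx hzy
    · intro i
      refine rel_sub.2 fun x y hxy => ?_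
      obtain ⟨w, hw⟩ := g7 i x
      cases hxy
      exact ⟨w, hw.1, w, hw.2, hw.1⟩
    · intro i
      refine rel_sub.2 fun x y hxy => ?_
      obtain ⟨w, -, hwy⟩ := hxy
      cases g5 _ _ hwy
      exact g8 i x y hwy
    · exact rel_ext.2 fun x y => g9 x y
    · refine rel_ext.2 fun x y => ?_
      obtain ⟨w, hw⟩ := g10
      exact ⟨fun _ => trivial, fun _ => ⟨w, trivial, w, hw, trivial⟩⟩
    · intro a
      refine rel_sub.2 fun x y hxy => ?_
      obtain ⟨hx, hy⟩ := g11 a x y hxy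
      exact ⟨x, hx, y, trivial, hy⟩
  · rintro ⟨g1, g2, g3, g4, g5, g6, g7, g8, g9, g10, g11⟩
    have h5 : ∀ x y : D, (x, y) ∈ I .U → x = y := fun x y hxy => g5 hxy
    refine ⟨?_, ?_, ?_, ?_, h5, ?_, ?_, ?_, ?_, ?_, ?_⟩
    · intro x y
      rw [rel_ext.1 g1 x y]
      simp [Set.mem_iInter]
    · intro i x y
      rw [rel_ext.1 (g2 i) x y, Set.mem_inter_iff]
      exact Iff.rfl
    · intro i x y
      rw [rel_ext.1 (g3 i) x y, Set.mem_inter_iff]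
      exact Iff.rfl
    · intro i x y
      rw [rel_ext.1 (g4 i) x y, Set.mem_inter_iff]
    · intro i z x y hzx hzy
      exact rel_sub.1 (g6 i) x y ⟨z, hzx, hzy⟩
    · intro i x
      obtain ⟨y, hy, z, hz, hz'⟩ := rel_sub.1 (g7 i) x x rfl
      cases h5 _ _ hz
      exact ⟨y, hy, hz⟩
    · intro i x y hyy
      exact rel_sub.1 (g8 i) x y ⟨y, trivial, hyy⟩
    · intro x y
      exact rel_ext.1 g9 x y
    · obtain ⟨x⟩ := (inferInstance : Nonempty D)
      obtain ⟨w, -, z, hz, -⟩ := (rel_ext.1 g10 x x).2 trivial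
      cases h5 _ _ hz
      exact ⟨w, hz⟩
    · intro a x y hxy
      obtain ⟨w, hw, z, -, hz⟩ := rel_sub.1 (g11 a) x y hxy
      cases h5 _ _ hw
      cases h5 _ _ hz
      exact ⟨hw, hz⟩

section Rep

variable {I : SigK σ k → Set (D × D)}

/-- The map sending `x` to the (unique) element of `E` that is its `i`-th projection. -/
noncomputable def emap (h : satGammaFO3 I) (x : D) (i : Fin k) : {y : D // (y, y) ∈ I .U} :=
  ⟨(h.2.2.2.2.2.2.1 i x).choose, (h.2.2.2.2.2.2.1 i x).choose_spec.2⟩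

variable (h : satGammaFO3 I)

lemma emap_pi (x : D) (i : Fin k) : (x, (emap h x i).val) ∈ I (.pi i) :=
  (h.2.2.2.2.2.2.1 i x).choose_spec.1

lemma emap_unique {x y : D} {i : Fin k} (hxy : (x, y) ∈ I (.pi i)) :
    (emap h x i).val = y :=
  h.2.2.2.2.2.1 i x _ y (emap_pi h x i) hxy

lemma pi_iff {x y : D} {i : Fin k} : (x, y) ∈ I (.pi i) ↔ y = (emap h x i).val :=
  ⟨fun hxy => (emap_unique h hxy).symm, fun e => by rw [e]; exact emap_pi h x i⟩

lemma common_iff {x y : D} {i : Fin k} :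
    (∃ z, (x, z) ∈ I (.pi i) ∧ (y, z) ∈ I (.pi i)) ↔ emap h x i = emap h y i := by
  constructor
  · rintro ⟨z, hx, hy⟩
    exact Subtype.ext ((emap_unique h hx).trans (emap_unique h hy).symm)
  · intro e
    refine ⟨(emap h x i).val, emap_pi h x i, ?_⟩
    rw [e]; exact emap_pi h y i

lemma mem_ELx {n : Fin (k + 1)} {x y : D} :
    (x, y) ∈ ELx I n ↔ ∀ j : Fin k, (j : ℕ) < (n : ℕ) → emap h x j = emap h y j := by
  obtain ⟨m, hm⟩ := n
  induction m with
  | zero => simp [ELx]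
  | succ p ih =>
    have hpk : p < k := by omega
    have hp : p < k + 1 := by omega
    rw [ELx, dif_neg (by simp)]
    have hidx : (⟨p + 1 - 1, by omega⟩ : Fin k) = ⟨p, hpk⟩ := rfl
    rw [hidx, h.2.1 ⟨p, hpk⟩ x y, common_iff h]
    have ihp : (x, y) ∈ ELx I ⟨p, hp⟩ ↔
        ∀ j : Fin k, (j : ℕ) < p → emap h x j = emap h y j := ih hp
    show ((x, y) ∈ ELx I ⟨p, hp⟩ ∧ emap h x ⟨p, hpk⟩ = emap h y ⟨p, hpk⟩) ↔
      ∀ j : Fin k, (j : ℕ) < p + 1 → emap h x j = emap h y j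
    rw [ihp]
    constructor
    · rintro ⟨h1, h2⟩ j hj
      rcases Nat.lt_succ_iff_lt_or_eq.1 hj with hj' | hj'
      · exact h1 j hj'
      · have : j = ⟨p, hpk⟩ := Fin.ext hj'
        rw [this]; exact h2
    · intro hall
      exact ⟨fun j hj => hall j (by omega), hall ⟨p, hpk⟩ (by simp)⟩

lemma mem_ERx_aux : ∀ d m (hm : m < k + 1), k - m ≤ d → ∀ x y : D,
    ((x, y) ∈ ERx I ⟨m, hm⟩ ↔
      ∀ j : Fin k, m ≤ (j : ℕ) → emap h x j = emap h y j) := by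
  intro d
  induction d with
  | zero =>
    intro m hm hd x y
    have hmk : m = k := by omega
    rw [ERx, dif_pos hmk]
    simp only [Set.mem_univ, true_iff]
    intro j hj
    exact absurd j.isLt (by omega)
  | succ p ih =>
    intro m hm hd x y
    by_cases hmk : m = k
    · rw [ERx, dif_pos hmk]
      simp only [Set.mem_univ, true_iff]
      intro j hj
      exact absurd j.isLt (by omega)
    · have hmk' : m < k := by omega
      rw [ERx, dif_neg hmk]
      have hidx : (⟨m, by omega⟩ : Fin k) = ⟨m, hmk'⟩ := rfl
      rw [hidx, h.2.2.1 ⟨m, hmk'⟩ x y, common_iff h]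
      have ihm : (x, y) ∈ ERx I ⟨m + 1, by omega⟩ ↔
          ∀ j : Fin k, m + 1 ≤ (j : ℕ) → emap h x j = emap h y j :=
        ih (m + 1) (by omega) (by omega) x y
      show ((x, y) ∈ ERx I ⟨m + 1, by omega⟩ ∧
          emap h x ⟨m, hmk'⟩ = emap h y ⟨m, hmk'⟩) ↔
        ∀ j : Fin k, m ≤ (j : ℕ) → emap h x j = emap h y j
      rw [ihm]
      constructor
      · rintro ⟨h1, h2⟩ j hj
        rcases Nat.lt_or_ge (m : ℕ) (j : ℕ) with hj' | hj'
        · exact h1 j (by omega)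
        · have : j = ⟨m, hmk'⟩ := Fin.ext (by show (j : ℕ) = m; omega)
          rw [this]; exact h2
      · intro hall
        exact ⟨fun j hj => hall j (by omega), hall ⟨m, hmk'⟩ (by simp)⟩

lemma mem_ERx {n : Fin (k + 1)} {x y : D} :
    (x, y) ∈ ERx I n ↔ ∀ j : Fin k, (n : ℕ) ≤ (j : ℕ) → emap h x j = emap h y j := by
  obtain ⟨m, hm⟩ := n
  exact mem_ERx_aux h (k - m) m hm le_rfl x y

lemma mem_Q {i : Fin k} {x y : D} :
    (x, y) ∈ I (.Q i) ↔ ∀ j : Fin k, j ≠ i → emap h x j = emap h y j := by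
  rw [h.2.2.2.1 i x y, mem_ELx h, mem_ERx h]
  simp only [Fin.coe_castSucc, Fin.val_succ]
  constructor
  · rintro ⟨hl, hr⟩ j hj
    have hj' : (j : ℕ) ≠ (i : ℕ) := fun e => hj (Fin.ext e)
    rcases Nat.lt_or_ge (j : ℕ) (i : ℕ) with h' | h'
    · exact hl j h'
    · exact hr j (by omega)
  · intro hall
    constructor
    · intro j hj
      exact hall j (fun e => by rw [e] at hj; omega)
    · intro j hj
      exact hall j (fun e => by rw [e] at hj; omega)

lemma mem_EL {i : Fin k} {x y : D} :
    (x, y) ∈ I (.EL i) ↔ ∀ j : Fin k, j ≤ i → emap h x j = emap h y j := by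
  rw [h.2.1 i x y, mem_ELx h, common_iff h]
  simp only [Fin.coe_castSucc]
  constructor
  · rintro ⟨h1, h2⟩ j hj
    rcases Nat.lt_or_ge (j : ℕ) (i : ℕ) with h' | h'
    · exact h1 j h'
    · have : j = i := Fin.ext (le_antisymm (Fin.le_def.1 hj) h')
      rw [this]; exact h2
  · intro hall
    exact ⟨fun j hj => hall j (Fin.le_def.2 (by omega)), hall i le_rfl⟩

lemma mem_ER {i : Fin k} {x y : D} :
    (x, y) ∈ I (.ER i) ↔ ∀ j : Fin k, i ≤ j → emap h x j = emap h y j := by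
  rw [h.2.2.1 i x y, mem_ERx h, common_iff h]
  simp only [Fin.val_succ]
  constructor
  · rintro ⟨h1, h2⟩ j hj
    rcases Nat.lt_or_ge (i : ℕ) (j : ℕ) with h' | h'
    · exact h1 j (by omega)
    · have : j = i := Fin.ext (le_antisymm h' (Fin.le_def.1 hj))
      rw [this]; exact h2
  · intro hall
    exact ⟨fun j hj => hall j (Fin.le_def.2 (by omega)), hall i le_rfl⟩

lemma emap_diag {x : D} (hx : (x, x) ∈ I .U) (i : Fin k) : (emap h x i).val = x :=
  emap_unique h ((h.1 x x).1 hx i)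

lemma eq_of_emap_const {x v : D} (hv : ∀ i, (emap h x i).val = v) : x = v := by
  have hU : (x, v) ∈ I .U := (h.1 x v).2 fun j => by
    rw [pi_iff h]; exact (hv j).symm
  exact h.2.2.2.2.1 x v hU

lemma emap_inj {x y : D} (hxy : ∀ j, emap h x j = emap h y j) : x = y := by
  refine (h.2.2.2.2.2.2.2.2.1 x y).2 ?_
  rw [mem_ELx h]
  intro j _
  exact hxy j

lemma surj_aux (f : Fin k → {y : D // (y, y) ∈ I .U}) :
    ∀ m, m ≤ k → ∀ x : D, ∃ z : D,
      (∀ j : Fin k, (j : ℕ) < m → emap h z j = f j) ∧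
      (∀ j : Fin k, m ≤ (j : ℕ) → emap h z j = emap h x j) := by
  intro m
  induction m with
  | zero => exact fun _ x => ⟨x, fun j hj => absurd hj (by omega), fun j _ => rfl⟩
  | succ p ih =>
    intro hp x
    obtain ⟨z, hz1, hz2⟩ := ih (by omega) x
    have hpk : p < k := hp
    obtain ⟨z', hz'Q, hz'pi⟩ :=
      h.2.2.2.2.2.2.2.1 ⟨p, hpk⟩ z (f ⟨p, hpk⟩).val (f ⟨p, hpk⟩).2
    have hQ := (mem_Q h).1 hz'Q
    refine ⟨z', ?_, ?_⟩
    · intro j hj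
      rcases Nat.lt_succ_iff_lt_or_eq.1 hj with hj' | hj'
      · rw [← hQ j (fun e => by rw [e] at hj'; simp at hj')]
        exact hz1 j hj'
      · have : j = ⟨p, hpk⟩ := Fin.ext hj'
        subst this
        exact Subtype.ext (emap_unique h hz'pi)
    · intro j hj
      rw [← hQ j (fun e => by rw [e] at hj; simp at hj)]
      exact hz2 j (by omega)

/-- The correspondence between `I` and the tuple structure on `E`. -/
lemma corr (s : SigK σ k) (x y : D) :
    (x, y) ∈ I s ↔
      ((fun i => emap h x i), (fun i => emap h y i)) ∈
        tupleInterp (fun a => {p : {y : D // (y, y) ∈ I .U} × {y : D // (y, y) ∈ I .U} |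
          (p.1.val, p.2.val) ∈ I (.base a)}) s := by
  cases s with
  | base a =>
    simp only [tupleInterp, Set.mem_setOf_eq]
    constructor
    · intro hxy
      obtain ⟨hx, hy⟩ := h.2.2.2.2.2.2.2.2.2.2 a x y hxy
      refine ⟨⟨x, hx⟩, ⟨y, hy⟩, hxy, ?_, ?_⟩
      · funext i; exact Subtype.ext (emap_diag h hx i)
      · funext i; exact Subtype.ext (emap_diag h hy i)
    · rintro ⟨v, w, hvw, hx, hy⟩
      have hxv : x = v.val := eq_of_emap_const h fun i => congrArg Subtype.val (congrFun hx i)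
      have hyw : y = w.val := eq_of_emap_const h fun i => congrArg Subtype.val (congrFun hy i)
      rw [hxv, hyw]; exact hvw
  | U =>
    simp only [tupleInterp, Set.mem_setOf_eq]
    constructor
    · intro hxy
      have hxy' : x = y := h.2.2.2.2.1 x y hxy
      subst hxy'
      refine ⟨⟨x, hxy⟩, ?_, ?_⟩ <;>
      · funext i; exact Subtype.ext (emap_diag h hxy i)
    · rintro ⟨v, hx, hy⟩
      have hxv : x = v.val := eq_of_emap_const h fun i => congrArg Subtype.val (congrFun hx i)
      have hyv : y = v.val := eq_of_emap_const h fun i => congrArg Subtype.val (congrFun hy i)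
      rw [hxv, hyv]; exact v.2
  | pi i =>
    simp only [tupleInterp, Set.mem_setOf_eq]
    constructor
    · intro hxy
      have hy : y = (emap h x i).val := (pi_iff h).1 hxy
      have hyU : (y, y) ∈ I .U := by rw [hy]; exact (emap h x i).2
      funext j
      exact Subtype.ext (by rw [emap_diag h hyU j, hy]; rfl)
    · intro he
      have hv : ∀ j, (emap h y j).val = (emap h x i).val :=
        fun j => congrArg Subtype.val (congrFun he j)
      rw [pi_iff h]
      exact eq_of_emap_const h hv
  | Q i =>
    rw [mem_Q h]
    simp only [tupleInterp, Set.mem_setOf_eq]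
  | EL i =>
    rw [mem_EL h]
    simp only [tupleInterp, Set.mem_setOf_eq]
  | ER i =>
    rw [mem_ER h]
    simp only [tupleInterp, Set.mem_setOf_eq]

lemma tuple_ELx {E : Type} (N : σ → Set (E × E)) (n : Fin (k + 1)) (p q : Fin k → E) :
    (p, q) ∈ ELx (tupleInterp N) n ↔ ∀ j : Fin k, (j : ℕ) < (n : ℕ) → p j = q j := by
  rw [ELx]
  split
  · rename_i h0
    simp only [Set.mem_univ, true_iff]
    intro j hj
    omega
  · rename_i h0
    simp only [tupleInterp, Set.mem_setOf_eq]
    constructor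
    · intro hall j hj
      exact hall j (Fin.le_def.2 (show (j : ℕ) ≤ (n : ℕ) - 1 by omega))
    · intro hall j hj
      have h2 : (j : ℕ) ≤ (n : ℕ) - 1 := Fin.le_def.1 hj
      exact hall j (by omega)

lemma tuple_ERx {E : Type} (N : σ → Set (E × E)) (n : Fin (k + 1)) (p q : Fin k → E) :
    (p, q) ∈ ERx (tupleInterp N) n ↔ ∀ j : Fin k, (n : ℕ) ≤ (j : ℕ) → p j = q j := by
  rw [ERx]
  split
  · rename_i h0
    simp only [Set.mem_univ, true_iff]
    intro j hj
    exact absurd j.isLt (by omega)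
  · rename_i h0
    simp only [tupleInterp, Set.mem_setOf_eq]
    constructor
    · intro hall j hj
      exact hall j (Fin.le_def.2 (show (n : ℕ) ≤ (j : ℕ) from hj))
    · intro hall j hj
      exact hall j (Fin.le_def.1 hj)

lemma tuple_sat {E : Type} [Nonempty E] (hk : 1 ≤ k) (N : σ → Set (E × E)) :
    satGammaFO3 (k := k) (tupleInterp N) := by
  have hk0 : 0 < k := hk
  refine ⟨?_, ?_, ?_, ?_, ?_, ?_, ?_, ?_, ?_, ?_, ?_⟩
  · intro p q
    simp only [tupleInterp, Set.mem_setOf_eq]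
    constructor
    · rintro ⟨v, rfl, rfl⟩ j
      rfl
    · intro hall
      refine ⟨p ⟨0, hk0⟩, ?_, hall ⟨0, hk0⟩⟩
      funext j
      have h1 := congrFun (hall j) ⟨0, hk0⟩
      have h2 := congrFun (hall ⟨0, hk0⟩) ⟨0, hk0⟩
      exact h1.symm.trans h2
  · intro i p q
    rw [tuple_ELx]
    simp only [tupleInterp, Set.mem_setOf_eq, Fin.coe_castSucc]
    constructor
    · intro hall
      refine ⟨fun j hj => hall j (Fin.le_def.2 (by omega)),
        Function.const (Fin k) (p i), rfl, ?_⟩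
      rw [hall i le_rfl]
    · rintro ⟨hlt, r, hr1, hr2⟩ j hj
      have hij : p i = q i := congrFun (hr1.symm.trans hr2) i
      rcases Nat.lt_or_ge (j : ℕ) (i : ℕ) with h' | h'
      · exact hlt j h'
      · have : j = i := Fin.ext (le_antisymm (Fin.le_def.1 hj) h')
        rw [this]; exact hij
  · intro i p q
    rw [tuple_ERx]
    simp only [tupleInterp, Set.mem_setOf_eq, Fin.val_succ]
    constructor
    · intro hall
      refine ⟨fun j hj => hall j (Fin.le_def.2 (by omega)),
        Function.const (Fin k) (p i), rfl, ?_⟩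
      rw [hall i le_rfl]
    · rintro ⟨hgt, r, hr1, hr2⟩ j hj
      have hij : p i = q i := congrFun (hr1.symm.trans hr2) i
      rcases Nat.lt_or_ge (i : ℕ) (j : ℕ) with h' | h'
      · exact hgt j (by omega)
      · have : j = i := Fin.ext (le_antisymm h' (Fin.le_def.1 hj))
        rw [this]; exact hij
  · intro i p q
    rw [tuple_ELx, tuple_ERx]
    simp only [tupleInterp, Set.mem_setOf_eq, Fin.coe_castSucc, Fin.val_succ]
    constructor
    · intro hall
      constructor
      · intro j hj
        exact hall j (fun e => by rw [e] at hj; omega)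
      · intro j hj
        exact hall j (fun e => by rw [e] at hj; omega)
    · rintro ⟨hl, hr⟩ j hj
      have hne : (j : ℕ) ≠ (i : ℕ) := fun e => hj (Fin.ext e)
      rcases Nat.lt_or_ge (j : ℕ) (i : ℕ) with h' | h'
      · exact hl j h'
      · exact hr j (by omega)
  · rintro p q ⟨v, rfl, rfl⟩
    rfl
  · intro i p q r hq hr
    have hq' : q = Function.const (Fin k) (p i) := hq
    have hr' : r = Function.const (Fin k) (p i) := hr
    rw [hq', hr']
  · intro i p
    exact ⟨Function.const (Fin k) (p i), rfl, p i, rfl, rfl⟩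
  · intro i p q hq
    obtain ⟨v, hv1, hv2⟩ := hq
    refine ⟨Function.update p i v, ?_, ?_⟩
    · intro j hj
      exact (Function.update_of_ne hj v p).symm
    · show q = Function.const (Fin k) (Function.update p i v i)
      rw [Function.update_self]
      exact hv1
  · intro p q
    rw [tuple_ELx]
    constructor
    · rintro rfl j _
      rfl
    · intro hall
      funext j
      exact hall j (by simp only [Fin.val_last]; exact j.isLt)
  · obtain ⟨v⟩ := (inferInstance : Nonempty E)
    exact ⟨Function.const (Fin k) v, v, rfl, rfl⟩
  · intro a p q hpq
    obtain ⟨v, w, hvw, h1, h2⟩ := hpq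
    exact ⟨⟨v, h1, h1⟩, ⟨w, h2, h2⟩⟩

lemma transport {E : Type} (e : D ≃ (Fin k → E)) (N : σ → Set (E × E))
    (H : ∀ s x y, (x, y) ∈ I s ↔ (e x, e y) ∈ tupleInterp N s)
    (hJ : satGammaFO3 (k := k) (tupleInterp N)) : satGammaFO3 I := by
  have HL : ∀ (n : Fin (k + 1)) (x y : D),
      (x, y) ∈ ELx I n ↔ (e x, e y) ∈ ELx (tupleInterp N) n := by
    intro n x y
    rw [ELx, ELx]
    split
    · simp
    · exact H _ x y
  have HR : ∀ (n : Fin (k + 1)) (x y : D),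
      (x, y) ∈ ERx I n ↔ (e x, e y) ∈ ERx (tupleInterp N) n := by
    intro n x y
    rw [ERx, ERx]
    split
    · simp
    · exact H _ x y
  obtain ⟨g1, g2, g3, g4, g5, g6, g7, g8, g9, g10, g11⟩ := hJ
  refine ⟨?_, ?_, ?_, ?_, ?_, ?_, ?_, ?_, ?_, ?_, ?_⟩
  · intro x y
    rw [H .U x y, g1 (e x) (e y)]
    exact ⟨fun hall j => (H (.pi j) x y).2 (hall j),
      fun hall j => (H (.pi j) x y).1 (hall j)⟩
  · intro i x y
    rw [H (.EL i) x y, g2 i (e x) (e y), ← HL i.castSucc x y]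
    refine and_congr_right fun _ => ⟨?_, ?_⟩
    · rintro ⟨q, h1, h2⟩
      refine ⟨e.symm q, (H _ _ _).2 (by rw [Equiv.apply_symm_apply]; exact h1),
        (H _ _ _).2 (by rw [Equiv.apply_symm_apply]; exact h2)⟩
    · rintro ⟨z, h1, h2⟩
      exact ⟨e z, (H _ _ _).1 h1, (H _ _ _).1 h2⟩
  · intro i x y
    rw [H (.ER i) x y, g3 i (e x) (e y), ← HR i.succ x y]
    refine and_congr_right fun _ => ⟨?_, ?_⟩
    · rintro ⟨q, h1, h2⟩
      refine ⟨e.symm q, (H _ _ _).2 (by rw [Equiv.apply_symm_apply]; exact h1),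
        (H _ _ _).2 (by rw [Equiv.apply_symm_apply]; exact h2)⟩
    · rintro ⟨z, h1, h2⟩
      exact ⟨e z, (H _ _ _).1 h1, (H _ _ _).1 h2⟩
  · intro i x y
    rw [H (.Q i) x y, g4 i (e x) (e y), ← HL i.castSucc x y, ← HR i.succ x y]
  · intro x y hxy
    exact e.injective (g5 (e x) (e y) ((H .U x y).1 hxy))
  · intro i x y z h1 h2
    exact e.injective (g6 i (e x) (e y) (e z) ((H _ _ _).1 h1) ((H _ _ _).1 h2))
  · intro i x
    obtain ⟨q, h1, h2⟩ := g7 i (e x)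
    exact ⟨e.symm q, (H _ _ _).2 (by rw [Equiv.apply_symm_apply]; exact h1),
      (H _ _ _).2 (by rw [Equiv.apply_symm_apply]; exact h2)⟩
  · intro i x y hyy
    obtain ⟨r, h1, h2⟩ := g8 i (e x) (e y) ((H _ _ _).1 hyy)
    exact ⟨e.symm r, (H _ _ _).2 (by rw [Equiv.apply_symm_apply]; exact h1),
      (H _ _ _).2 (by rw [Equiv.apply_symm_apply]; exact h2)⟩
  · intro x y
    rw [HL (Fin.last k) x y, ← g9 (e x) (e y)]
    exact ⟨congrArg e, fun hxy => e.injective hxy⟩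
  · obtain ⟨q, hq⟩ := g10
    exact ⟨e.symm q, (H _ _ _).2 (by rw [Equiv.apply_symm_apply]; exact hq)⟩
  · intro a x y hxy
    obtain ⟨h1, h2⟩ := g11 a (e x) (e y) ((H _ _ _).1 hxy)
    exact ⟨(H _ _ _).2 h1, (H _ _ _).2 h2⟩

end Rep

end Aux

/-- a structure over `Σ^(k)` satisfies `⋀Γ_{FO3}^(k)` iff it
satisfies `⋀Γ^(k)`; consequently, iff it is isomorphic to a `k`-tuple structure. -/
theorem satGammaFO3_iff {σ : Type} {k : ℕ} (hk : 1 ≤ k) {D : Type} [Nonempty D]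
    (I : SigK σ k → Set (D × D)) :
    (satGammaFO3 I ↔ satGamma I) ∧
    (satGammaFO3 I ↔
      ∃ (E : Type) (_ : Nonempty E) (N : σ → Set (E × E)) (e : D ≃ (Fin k → E)),
        ∀ (s : SigK σ k) (x y : D),
          (x, y) ∈ I s ↔ (e x, e y) ∈ tupleInterp N s) := by
  refine ⟨satGammaFO3_iff_satGamma I, ?_, ?_⟩
  · intro h
    have hne : Nonempty {y : D // (y, y) ∈ I .U} := by
      obtain ⟨x, hx⟩ := h.2.2.2.2.2.2.2.2.2.1
      exact ⟨⟨x, hx⟩⟩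
    refine ⟨{y : D // (y, y) ∈ I .U}, hne,
      fun a => {p | (p.1.val, p.2.val) ∈ I (.base a)},
      Equiv.ofBijective (fun x i => emap h x i) ⟨?_, ?_⟩, ?_⟩
    · intro x y hxy
      exact emap_inj h fun j => congrFun hxy j
    · intro f
      obtain ⟨z, hz1, -⟩ := surj_aux h f k le_rfl (Classical.arbitrary D)
      exact ⟨z, funext fun j => hz1 j j.isLt⟩
    · intro s x y
      exact corr h s x y
  · rintro ⟨E, hne, N, e, H⟩
    haveI := hne
    exact transport e N H (tuple_sat hk N)


end CoRPaper
end
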